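/- arXiv:2501.17487 — 2 statements merged into one kernel-verified Lean document; each statement's English description precedes it below -/
import Mathlib

section
/- Let W = (ℤ/2)ⁱ ⋊ Σᵢ act on (ℂ*)ⁱ by first permuting the coordinates (via Σᵢ) and then applying complex conjugation in each coordinate where the corresponding ℤ/2-entry is nontrivial, and form the semidirect product G = (ℂ*)ⁱ ⋊ W. Then every element of G whose W-component is nontrivial has a non-discrete conjugacy class, and hence every discrete normal subgroup of G is contained in (ℂ*)ⁱ × {1}. -/
open Complex

/-- Complex conjugation as an automorphism of `ℂˣ`. -/
noncomputable def conjUnits : ℂˣ ≃* ℂˣ := Units.mapEquiv (starMulAut : ℂ ≃* ℂ)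

lemma conjUnits_sq : conjUnits * conjUnits = 1 := by
  ext u
  simp [conjUnits, Units.mapEquiv]

/-- The action of `ℤ/2` on `ℂˣ` with the nontrivial element acting by conjugation. -/
noncomputable def conjHom : Multiplicative (ZMod 2) →* MulAut ℂˣ :=
  MonoidHom.mk' (fun g => if Multiplicative.toAdd g = 0 then 1 else conjUnits)
    (by
      intro a b
      have hcases : ∀ x : ZMod 2, x = 0 ∨ x = 1 := by decide
      rcases hcases (Multiplicative.toAdd a) with ha | ha <;>
        rcases hcases (Multiplicative.toAdd b) with hb | hb <;>
          simp [toAdd_mul, ha, hb, conjUnits_sq, (by decide : (1 + 1 : ZMod 2) = 0),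
            (by decide : (1 : ZMod 2) ≠ 0)])

variable (i : ℕ)

/-- The permutation action of `Σᵢ` on `(ℤ/2)ⁱ`. -/
noncomputable def permHom : Equiv.Perm (Fin i) →* MulAut (Fin i → Multiplicative (ZMod 2)) :=
  MonoidHom.mk' (fun σ => MulEquiv.arrowCongr σ (MulEquiv.refl (Multiplicative (ZMod 2))))
    (by
      intro σ τ
      ext f j
      simp [MulEquiv.arrowCongr, Equiv.Perm.mul_def, Equiv.symm_trans_apply])

/-- The group `W = (ℤ/2)ⁱ ⋊ Σᵢ`. -/
noncomputable abbrev Wgrp :=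
  SemidirectProduct (Fin i → Multiplicative (ZMod 2)) (Equiv.Perm (Fin i)) (permHom i)

variable {i}

/-- The action of `W` on `(ℂ*)ⁱ`: first permute the coordinates, then conjugate each
coordinate whose `ℤ/2`-entry is nontrivial. -/
noncomputable def actFun (w : Wgrp i) (z : Fin i → ℂˣ) : Fin i → ℂˣ :=
  fun j => conjHom (w.left j) (z (w.right⁻¹ j))

lemma actFun_comp (w w' : Wgrp i) (z : Fin i → ℂˣ) :
    actFun w (actFun w' z) = actFun (w * w') z := by
  funext j
  simp [actFun, SemidirectProduct.mul_left, SemidirectProduct.mul_right, permHom,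
    MulEquiv.arrowCongr, map_mul, MulAut.mul_apply, mul_inv_rev, Equiv.Perm.mul_apply,
    Equiv.Perm.inv_def]

lemma actFun_one (z : Fin i → ℂˣ) : actFun (1 : Wgrp i) z = z := by
  funext j
  simp [actFun]

/-- The action of `w ∈ W` on `(ℂ*)ⁱ` as a group automorphism. -/
noncomputable def actAut (w : Wgrp i) : MulAut (Fin i → ℂˣ) where
  toFun := actFun w
  invFun := actFun w⁻¹
  left_inv := fun z => by rw [actFun_comp, inv_mul_cancel, actFun_one]
  right_inv := fun z => by rw [actFun_comp, mul_inv_cancel, actFun_one]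
  map_mul' := fun a b => by
    funext j
    simp [actFun, Pi.mul_apply, map_mul]

variable (i)

/-- The action of `W = (ℤ/2)ⁱ ⋊ Σᵢ` on `(ℂ*)ⁱ` as a homomorphism `W →* Aut((ℂ*)ⁱ)`. -/
noncomputable def psi : Wgrp i →* MulAut (Fin i → ℂˣ) :=
  MonoidHom.mk' actAut
    (fun w w' => MulEquiv.ext fun z => (actFun_comp w w' z).symm)

/-- The group `G = (ℂ*)ⁱ ⋊ W`. -/
noncomputable abbrev Ggrp := SemidirectProduct (Fin i → ℂˣ) (Wgrp i) (psi i)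

instance : TopologicalSpace (Wgrp i) := ⊥

/-- The topology on `G`: the product of the standard topology on `(ℂ*)ⁱ` and the discrete
topology on `W`. -/
noncomputable instance : TopologicalSpace (Ggrp i) :=
  TopologicalSpace.induced (fun g : Ggrp i => (g.left, g.right)) inferInstance

/-!
Conjugating `g = (a, w)` by `t ∈ (ℂ*)ⁱ` gives `(t · a · w(t)⁻¹, w)`, which equals `g` exactly when
`w(t) = t`. If the conjugacy class were discrete, `g` would be isolated in it, so `w` would fix
every `t` near `1`. But for `w ≠ 1` some coordinate `j` is either moved by the permutation or
conjugated, and then `w` does not fix `t = (1, …, u, …, 1)` (with `u` in slot `j`) for any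
non-real `u`, and such `u` exist arbitrarily close to `1`. A discrete normal subgroup contains the
conjugacy classes of its elements, which are then discrete too.
-/

open Filter Topology

namespace SemidirectProduct

variable {N G : Type*} [CommGroup N] [Group G] {φ : G →* MulAut N}

theorem commute_inl_iff (n : N) (g : N ⋊[φ] G) : Commute (inl n) g ↔ φ g.right n = n := by
  rw [Commute, SemiconjBy, SemidirectProduct.ext_iff]
  simp [mul_comm n, eq_comm]

end SemidirectProduct

theorem Complex.not_eventually_im_eq_zero (x : ℂ) : ¬ ∀ᶠ z in 𝓝 x, z.im = 0 := by
  intro h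
  have hint : interior (im ⁻¹' {0}) = ∅ := by
    rw [interior_preimage_im, interior_singleton, Set.preimage_empty]
  exact (Set.eq_empty_iff_forall_notMem.mp hint) x (mem_interior_iff_mem_nhds.mpr h)

theorem conjUnits_eq_self_iff (u : ℂˣ) : conjUnits u = u ↔ (u : ℂ).im = 0 := by
  rw [Units.ext_iff, ← Complex.conj_eq_iff_im]
  rfl

theorem not_eventually_conjUnits_eq_self (u : ℂˣ) : ¬ ∀ᶠ v in 𝓝 u, conjUnits v = v := by
  intro h
  apply Complex.not_eventually_im_eq_zero (u : ℂ)
  rw [← IsOpenUnits.isOpenEmbedding_unitsVal.map_nhds_eq, eventually_map]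
  exact h.mono fun v hv => (conjUnits_eq_self_iff v).mp hv

theorem continuous_conjUnits : Continuous conjUnits :=
  continuous_star.units_map (starMulAut : ℂ ≃* ℂ).toMonoidHom

theorem conjHom_of_ne_one {ε : Multiplicative (ZMod 2)} (hε : ε ≠ 1) : conjHom ε = conjUnits := by
  simp [conjHom, hε]

theorem continuous_conjHom (ε : Multiplicative (ZMod 2)) : Continuous (conjHom ε) := by
  by_cases hε : ε = 1
  · simpa [hε] using continuous_id
  · simpa [conjHom_of_ne_one hε] using continuous_conjUnits

variable {i}

theorem psi_apply (w : Wgrp i) (t : Fin i → ℂˣ) (j : Fin i) :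
    psi i w t j = conjHom (w.left j) (t (w.right⁻¹ j)) :=
  rfl

theorem continuous_psi (w : Wgrp i) : Continuous (psi i w) :=
  continuous_pi fun _ => (continuous_conjHom _).comp (continuous_apply _)

theorem exists_conjUnits_eq_self_of_psi_mulSingle_eq {w : Wgrp i} (hw : w ≠ 1) :
    ∃ j, ∀ u : ℂˣ, psi i w (Pi.mulSingle j u) = Pi.mulSingle j u → conjUnits u = u := by
  by_cases hσ : ∃ j, w.right⁻¹ j ≠ j
  · obtain ⟨j, hj⟩ := hσ
    refine ⟨j, fun u heq => ?_⟩
    have hu1 := congrFun heq j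
    rw [psi_apply, Pi.mulSingle_eq_of_ne hj, map_one, Pi.mulSingle_eq_same] at hu1
    rw [← hu1, map_one]
  · push Not at hσ
    have hright : w.right = 1 := inv_eq_one.mp (Equiv.ext hσ)
    obtain ⟨j, hj⟩ : ∃ j, w.left j ≠ 1 := by
      by_contra! hleft
      exact hw (SemidirectProduct.ext (funext hleft) hright)
    refine ⟨j, fun u heq => ?_⟩
    have hfix := congrFun heq j
    rwa [psi_apply, hright, inv_one, Equiv.Perm.one_apply, Pi.mulSingle_eq_same,
      conjHom_of_ne_one hj] at hfix

theorem not_eventually_psi_apply_eq {w : Wgrp i} (hw : w ≠ 1) :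
    ¬ ∀ᶠ t in 𝓝 1, psi i w t = t := by
  intro h
  obtain ⟨j, hj⟩ := exists_conjUnits_eq_self_of_psi_mulSingle_eq hw
  have hsingle : Tendsto (fun u : ℂˣ => (Pi.mulSingle j u : Fin i → ℂˣ)) (𝓝 1) (𝓝 1) := by
    simpa using (continuous_mulSingle (A := fun _ : Fin i => ℂˣ) j).tendsto 1
  exact not_eventually_conjUnits_eq_self 1 ((hsingle.eventually h).mono hj)

theorem continuous_conj_inl (g : Ggrp i) :
    Continuous fun t : Fin i → ℂˣ => SemidirectProduct.inl t * g * (SemidirectProduct.inl t)⁻¹ := by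
  refine continuous_induced_rng.mpr ?_
  simpa [Function.comp_def] using
    ((continuous_id.mul continuous_const).mul (continuous_psi g.right).inv).prodMk
      (continuous_const (y := g.right))

theorem not_discreteTopology_isConj {g : Ggrp i} (hg : g.right ≠ 1) :
    ¬ DiscreteTopology {h : Ggrp i // IsConj g h} := by
  intro _
  let c : (Fin i → ℂˣ) → {h : Ggrp i // IsConj g h} := fun t =>
    ⟨_, isConj_iff.mpr ⟨SemidirectProduct.inl t, rfl⟩⟩
  have hc1 : c 1 = ⟨g, IsConj.refl g⟩ := Subtype.ext (by simp [c])
  have hc : ∀ᶠ t in 𝓝 1, c t = c 1 :=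
    ((continuous_conj_inl g).subtype_mk _).continuousAt.preimage_mem_nhds
      ((isOpen_discrete {c 1}).mem_nhds (Set.mem_singleton _))
  refine not_eventually_psi_apply_eq hg (hc.mono fun t ht => ?_)
  rw [hc1, Subtype.mk.injEq, mul_inv_eq_iff_eq_mul] at ht
  exact (SemidirectProduct.commute_inl_iff t g).mp ht

/-- in `G = (ℂ*)ⁱ ⋊ ((ℤ/2)ⁱ ⋊ Σᵢ)`, every element whose `W`-component is
nontrivial has a non-discrete conjugacy class, and hence every discrete normal subgroup of
`G` is contained in `(ℂ*)ⁱ × {1}`. -/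
theorem stmt_2 (i : ℕ) :
    (∀ g : Ggrp i, g.right ≠ 1 →
      ¬ DiscreteTopology {h : Ggrp i // IsConj g h}) ∧
    (∀ N : Subgroup (Ggrp i), N.Normal → DiscreteTopology N →
      ∀ g ∈ N, g.right = 1) := by
  refine ⟨fun g => not_discreteTopology_isConj, fun N hN hNd g hgN => ?_⟩
  by_contra hg
  refine not_discreteTopology_isConj hg (DiscreteTopology.of_subset hNd ?_)
  intro h hconj
  obtain ⟨c, rfl⟩ := isConj_iff.mp hconj
  exact hN.conj_mem g hgN c
end

section
/- Let (x₁,x₂) ∈ ℝ² ∖ {0}, r² = x₁²+x₂², and a₁,b₁ ∈ ℝ, and set (y₁,y₂) = (a₁r²+x₁, b₁r²+x₂) and P = (a₁²+b₁²)·r² + 2a₁x₁ + 2b₁x₂ + 1. Then y₁²+y₂² = r²·P. Moreover, if (y₁,y₂) ≠ (0,0) and a₂,b₂ ∈ ℝ, then the unique (a,b) ∈ ℝ² satisfying a·r²+x₁ = a₂·(y₁²+y₂²)+y₁ and b·r²+x₂ = b₂·(y₁²+y₂²)+y₂ is given by a = a₁ + a₂·P and b = b₁ + b₂·P. -/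
/-- Let `(x₁,x₂) ≠ (0,0)`, `r² = x₁²+x₂²`, `(y₁,y₂) = (a₁r²+x₁, b₁r²+x₂)` and
`P = (a₁²+b₁²)r² + 2a₁x₁ + 2b₁x₂ + 1`. Then `y₁²+y₂² = r²·P`; moreover if `(y₁,y₂) ≠ (0,0)`
then for any `a₂, b₂` there is a unique `(a,b)` with `a·r²+x₁ = a₂(y₁²+y₂²)+y₁` and
`b·r²+x₂ = b₂(y₁²+y₂²)+y₂`, and it is given by `(a₁+a₂P, b₁+b₂P)`. -/
theorem stmt_7 (x₁ x₂ a₁ b₁ : ℝ) (h : (x₁, x₂) ≠ (0, 0))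
    (y₁ y₂ P : ℝ)
    (hy₁ : y₁ = a₁ * (x₁ ^ 2 + x₂ ^ 2) + x₁) (hy₂ : y₂ = b₁ * (x₁ ^ 2 + x₂ ^ 2) + x₂)
    (hP : P = (a₁ ^ 2 + b₁ ^ 2) * (x₁ ^ 2 + x₂ ^ 2) + 2 * a₁ * x₁ + 2 * b₁ * x₂ + 1) :
    y₁ ^ 2 + y₂ ^ 2 = (x₁ ^ 2 + x₂ ^ 2) * P ∧
    ((y₁, y₂) ≠ ((0 : ℝ), (0 : ℝ)) → ∀ a₂ b₂ : ℝ,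
      (∃! p : ℝ × ℝ,
        p.1 * (x₁ ^ 2 + x₂ ^ 2) + x₁ = a₂ * (y₁ ^ 2 + y₂ ^ 2) + y₁ ∧
        p.2 * (x₁ ^ 2 + x₂ ^ 2) + x₂ = b₂ * (y₁ ^ 2 + y₂ ^ 2) + y₂) ∧
      ((a₁ + a₂ * P) * (x₁ ^ 2 + x₂ ^ 2) + x₁ = a₂ * (y₁ ^ 2 + y₂ ^ 2) + y₁ ∧
       (b₁ + b₂ * P) * (x₁ ^ 2 + x₂ ^ 2) + x₂ = b₂ * (y₁ ^ 2 + y₂ ^ 2) + y₂)) := by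
  have hx : x₁ ^ 2 + x₂ ^ 2 ≠ 0 := by
    intro h0
    apply h
    have h1 : x₁ = 0 := by nlinarith [sq_nonneg x₁, sq_nonneg x₂]
    have h2 : x₂ = 0 := by nlinarith [sq_nonneg x₁, sq_nonneg x₂]
    simp [h1, h2]
  have key : y₁ ^ 2 + y₂ ^ 2 = (x₁ ^ 2 + x₂ ^ 2) * P := by subst hy₁ hy₂ hP; ring
  refine ⟨key, fun _ a₂ b₂ => ?_⟩
  have h1 : (a₁ + a₂ * P) * (x₁ ^ 2 + x₂ ^ 2) + x₁ = a₂ * (y₁ ^ 2 + y₂ ^ 2) + y₁ := by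
    rw [key, hy₁]; ring
  have h2 : (b₁ + b₂ * P) * (x₁ ^ 2 + x₂ ^ 2) + x₂ = b₂ * (y₁ ^ 2 + y₂ ^ 2) + y₂ := by
    rw [key, hy₂]; ring
  refine ⟨⟨(a₁ + a₂ * P, b₁ + b₂ * P), ⟨h1, h2⟩, ?_⟩, h1, h2⟩
  rintro ⟨a, b⟩ ⟨ha, hb⟩
  have : a = a₁ + a₂ * P := by
    have := ha.trans h1.symm
    exact mul_right_cancel₀ hx (by linarith)
  have : b = b₁ + b₂ * P := by
    have := hb.trans h2.symm
    exact mul_right_cancel₀ hx (by linarith)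
  simp_all
end
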